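/- Let φ(y; θ, σ²) denote the density of N(θ, σ²·I_d) on ℝ^d, and for θ ∈ ℝ^d let P̃_θ = (1/2)N(θ, σ²I_d) + (1/2)N(-θ, σ²I_d) be the symmetric two-component Gaussian mixture. If θ_0, θ_1 ∈ ℝ^d satisfy ‖θ_0‖ = ‖θ_1‖ = t ≤ σ, then the chi-square divergence satisfies χ²(P̃_{θ_1} ‖ P̃_{θ_0}) ≤ (8t²/σ⁴)·‖θ_0 - θ_1‖². -/

import Mathlib

/-!
Write `φ₀ = gaussDen d σ 0`. Each mixture density is `φ₀` times the likelihood ratio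
`e^{-‖θ‖²/2σ²} cosh (⟪θ, y⟫/σ²)`, so by the product formula for `cosh` the function `p_a p_b / φ₀`
is a combination of the mixture densities with means `a ± b`, and it integrates to
`cosh (⟪a, b⟫/σ²)`. Since `cosh ≥ 1`, `p_{θ₀} ≥ e^{-t²/2σ²} φ₀`; putting this in the denominator
bounds the χ²-divergence by `2 e^{s/2} (cosh s - cosh c)` with `s = t²/σ²`, `c = ⟪θ₁, θ₀⟫/σ²`.
Finally `2 (cosh s - cosh c) = e^{-s} (e^s - e^c) (e^s - e^{-c}) ≤ (s² - c²) e^s`, and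
`e^{3s/2} ≤ 8` for `s ≤ 1`.
-/

open MeasureTheory

/-- Density of `N(θ, σ²·I_d)` on `ℝ^d`. -/
noncomputable def gaussDen (d : ℕ) (σ : ℝ) (θ y : EuclideanSpace ℝ (Fin d)) : ℝ :=
  (2 * Real.pi * σ ^ 2) ^ (-(d : ℝ) / 2) * Real.exp (-‖y - θ‖ ^ 2 / (2 * σ ^ 2))

/-- Density of the symmetric two-component Gaussian mixture
`(1/2)N(θ, σ²I_d) + (1/2)N(-θ, σ²I_d)`. -/
noncomputable def mixDen (d : ℕ) (σ : ℝ) (θ y : EuclideanSpace ℝ (Fin d)) : ℝ :=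
  (gaussDen d σ θ y + gaussDen d σ (-θ) y) / 2

open Real
open scoped RealInnerProductSpace

section

variable {d : ℕ} {σ : ℝ}

lemma integral_gaussDen (hσ : σ ≠ 0) (θ : EuclideanSpace ℝ (Fin d)) :
    ∫ y, gaussDen d σ θ y = 1 := by
  have hG : ∫ y : EuclideanSpace ℝ (Fin d), rexp (-‖y‖ ^ 2 / (2 * σ ^ 2))
      = (2 * π * σ ^ 2) ^ ((d : ℝ) / 2) := by
    convert GaussianFourier.integral_rexp_neg_mul_sq_norm (V := EuclideanSpace ℝ (Fin d))
      (b := 1 / (2 * σ ^ 2)) (by positivity) using 3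
    · ring_nf
    · field_simp
    · simp
  unfold gaussDen
  rw [integral_const_mul, integral_sub_right_eq_self (fun y => rexp (-‖y‖ ^ 2 / (2 * σ ^ 2))) θ,
    hG, ← rpow_add (by positivity), neg_div, neg_add_cancel, rpow_zero]

lemma integral_mixDen (hσ : σ ≠ 0) (θ : EuclideanSpace ℝ (Fin d)) :
    ∫ y, mixDen d σ θ y = 1 := by
  unfold mixDen
  rw [integral_div, integral_add (integrable_of_integral_eq_one (integral_gaussDen hσ θ))
    (integrable_of_integral_eq_one (integral_gaussDen hσ (-θ))), integral_gaussDen hσ,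
    integral_gaussDen hσ]
  norm_num

lemma gaussDen_pos (hσ : σ ≠ 0) (θ y : EuclideanSpace ℝ (Fin d)) : 0 < gaussDen d σ θ y := by
  unfold gaussDen
  positivity

lemma gaussDen_eq_exp_mul_gaussDen_zero (hσ : σ ≠ 0) (θ y : EuclideanSpace ℝ (Fin d)) :
    gaussDen d σ θ y = rexp (⟪θ, y⟫ / σ ^ 2 - ‖θ‖ ^ 2 / (2 * σ ^ 2)) * gaussDen d σ 0 y := by
  unfold gaussDen
  rw [sub_zero, mul_left_comm, ← exp_add, norm_sub_sq_real, real_inner_comm]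
  congr 2
  field_simp
  ring

lemma mixDen_eq_mul_gaussDen_zero (hσ : σ ≠ 0) (θ y : EuclideanSpace ℝ (Fin d)) :
    mixDen d σ θ y = rexp (-‖θ‖ ^ 2 / (2 * σ ^ 2)) * cosh (⟪θ, y⟫ / σ ^ 2) * gaussDen d σ 0 y := by
  rw [mixDen, gaussDen_eq_exp_mul_gaussDen_zero hσ θ, gaussDen_eq_exp_mul_gaussDen_zero hσ (-θ),
    inner_neg_left, norm_neg, cosh_eq]
  simp only [sub_eq_add_neg, exp_add, neg_div]
  ring

lemma exp_mul_gaussDen_zero_le_mixDen (hσ : σ ≠ 0) (θ y : EuclideanSpace ℝ (Fin d)) :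
    rexp (-‖θ‖ ^ 2 / (2 * σ ^ 2)) * gaussDen d σ 0 y ≤ mixDen d σ θ y := by
  rw [mixDen_eq_mul_gaussDen_zero hσ, mul_right_comm]
  exact le_mul_of_one_le_right (mul_pos (exp_pos _) (gaussDen_pos hσ 0 y)).le (one_le_cosh _)

lemma mixDen_mul_mixDen_div_gaussDen_zero (hσ : σ ≠ 0) (a b y : EuclideanSpace ℝ (Fin d)) :
    mixDen d σ a y * mixDen d σ b y / gaussDen d σ 0 y
      = (rexp (⟪a, b⟫ / σ ^ 2) * mixDen d σ (a + b) y
        + rexp (-(⟪a, b⟫ / σ ^ 2)) * mixDen d σ (a - b) y) / 2 := by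
  have hg := (gaussDen_pos hσ 0 y).ne'
  have hplus : rexp (-‖a‖ ^ 2 / (2 * σ ^ 2)) * rexp (-‖b‖ ^ 2 / (2 * σ ^ 2))
      = rexp (⟪a, b⟫ / σ ^ 2) * rexp (-‖a + b‖ ^ 2 / (2 * σ ^ 2)) := by
    rw [← exp_add, ← exp_add, norm_add_sq_real]
    congr 1
    field_simp
    ring
  have hminus : rexp (-‖a‖ ^ 2 / (2 * σ ^ 2)) * rexp (-‖b‖ ^ 2 / (2 * σ ^ 2))
      = rexp (-(⟪a, b⟫ / σ ^ 2)) * rexp (-‖a - b‖ ^ 2 / (2 * σ ^ 2)) := by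
    rw [← exp_add, ← exp_add, norm_sub_sq_real]
    congr 1
    field_simp
    ring
  have hcosh : cosh (⟪a, y⟫ / σ ^ 2) * cosh (⟪b, y⟫ / σ ^ 2)
      = (cosh (⟪a + b, y⟫ / σ ^ 2) + cosh (⟪a - b, y⟫ / σ ^ 2)) / 2 := by
    simp only [inner_add_left, inner_sub_left, add_div, sub_div, cosh_add, cosh_sub]
    ring
  rw [div_eq_iff hg]
  simp only [mixDen_eq_mul_gaussDen_zero hσ]
  linear_combination (gaussDen d σ 0 y ^ 2 / 2) *
    (cosh (⟪a + b, y⟫ / σ ^ 2) * hplus + cosh (⟪a - b, y⟫ / σ ^ 2) * hminus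
      + 2 * rexp (-‖a‖ ^ 2 / (2 * σ ^ 2)) * rexp (-‖b‖ ^ 2 / (2 * σ ^ 2)) * hcosh)

lemma integral_mixDen_mul_mixDen_div_gaussDen_zero (hσ : σ ≠ 0) (a b : EuclideanSpace ℝ (Fin d)) :
    Integrable (fun y => mixDen d σ a y * mixDen d σ b y / gaussDen d σ 0 y) ∧
      ∫ y, mixDen d σ a y * mixDen d σ b y / gaussDen d σ 0 y = cosh (⟪a, b⟫ / σ ^ 2) := by
  simp only [mixDen_mul_mixDen_div_gaussDen_zero hσ]
  have hplus := (integrable_of_integral_eq_one (integral_mixDen hσ (a + b))).const_mul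
    (rexp (⟪a, b⟫ / σ ^ 2))
  have hminus := (integrable_of_integral_eq_one (integral_mixDen hσ (a - b))).const_mul
    (rexp (-(⟪a, b⟫ / σ ^ 2)))
  refine ⟨(hplus.add hminus).div_const 2, ?_⟩
  rw [integral_div, integral_add hplus hminus, integral_const_mul, integral_const_mul,
    integral_mixDen hσ, integral_mixDen hσ, cosh_eq]
  ring

lemma integral_sq_sub_mixDen_div_gaussDen_zero (hσ : σ ≠ 0) (a b : EuclideanSpace ℝ (Fin d)) :
    Integrable (fun y => (mixDen d σ a y - mixDen d σ b y) ^ 2 / gaussDen d σ 0 y) ∧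
      ∫ y, (mixDen d σ a y - mixDen d σ b y) ^ 2 / gaussDen d σ 0 y
        = cosh (‖a‖ ^ 2 / σ ^ 2) - 2 * cosh (⟪a, b⟫ / σ ^ 2) + cosh (‖b‖ ^ 2 / σ ^ 2) := by
  obtain ⟨haa, haa'⟩ := integral_mixDen_mul_mixDen_div_gaussDen_zero hσ a a
  obtain ⟨hab, hab'⟩ := integral_mixDen_mul_mixDen_div_gaussDen_zero hσ a b
  obtain ⟨hbb, hbb'⟩ := integral_mixDen_mul_mixDen_div_gaussDen_zero hσ b b
  have hexpand : (fun y => (mixDen d σ a y - mixDen d σ b y) ^ 2 / gaussDen d σ 0 y)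
      = fun y => mixDen d σ a y * mixDen d σ a y / gaussDen d σ 0 y
        - 2 * (mixDen d σ a y * mixDen d σ b y / gaussDen d σ 0 y)
        + mixDen d σ b y * mixDen d σ b y / gaussDen d σ 0 y := by
    ext y
    ring
  have hsub : Integrable (fun y => mixDen d σ a y * mixDen d σ a y / gaussDen d σ 0 y
      - 2 * (mixDen d σ a y * mixDen d σ b y / gaussDen d σ 0 y)) :=
    haa.sub (hab.const_mul 2)
  rw [hexpand]
  refine ⟨hsub.add hbb, ?_⟩
  rw [integral_add hsub hbb, integral_sub haa (hab.const_mul 2), integral_const_mul, haa', hab',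
    hbb', real_inner_self_eq_norm_sq, real_inner_self_eq_norm_sq]

theorem chiSq_mixDen_le (hσ : σ ≠ 0) (a b : EuclideanSpace ℝ (Fin d)) :
    ∫ y, (mixDen d σ a y - mixDen d σ b y) ^ 2 / mixDen d σ b y
      ≤ rexp (‖b‖ ^ 2 / (2 * σ ^ 2))
        * (cosh (‖a‖ ^ 2 / σ ^ 2) - 2 * cosh (⟪a, b⟫ / σ ^ 2) + cosh (‖b‖ ^ 2 / σ ^ 2)) := by
  obtain ⟨hint, hval⟩ := integral_sq_sub_mixDen_div_gaussDen_zero hσ a b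
  rw [← hval, ← integral_const_mul]
  refine integral_mono_of_nonneg (.of_forall fun y => ?_) (hint.const_mul _) (.of_forall fun y => ?_)
  · exact div_nonneg (sq_nonneg _) ((mul_pos (exp_pos _) (gaussDen_pos hσ 0 y)).le.trans
      (exp_mul_gaussDen_zero_le_mixDen hσ b y))
  · calc (mixDen d σ a y - mixDen d σ b y) ^ 2 / mixDen d σ b y
        ≤ (mixDen d σ a y - mixDen d σ b y) ^ 2
            / (rexp (-‖b‖ ^ 2 / (2 * σ ^ 2)) * gaussDen d σ 0 y) :=
          div_le_div_of_nonneg_left (sq_nonneg _) (mul_pos (exp_pos _) (gaussDen_pos hσ 0 y))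
            (exp_mul_gaussDen_zero_le_mixDen hσ b y)
      _ = _ := by
          rw [neg_div, exp_neg]
          field_simp

lemma exp_sub_exp_le_mul_exp (s c : ℝ) : rexp s - rexp c ≤ (s - c) * rexp s := by
  have hc : rexp c = rexp (-(s - c)) * rexp s := by rw [← exp_add]; ring_nf
  rw [hc]
  nlinarith [one_sub_le_exp_neg (s - c), exp_pos s]

lemma two_mul_cosh_sub_cosh_le {s c : ℝ} (hc : |c| ≤ s) :
    2 * (cosh s - cosh c) ≤ (s - c) * (s + c) * rexp s := by
  obtain ⟨hcs, hsc⟩ := abs_le.mp hc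
  have hfactor : 2 * (cosh s - cosh c) * rexp s = (rexp s - rexp c) * (rexp s - rexp (-c)) := by
    rw [cosh_eq, cosh_eq, exp_neg, exp_neg]
    field_simp
    ring
  have hprod : (rexp s - rexp c) * (rexp s - rexp (-c)) ≤ (s - c) * rexp s * ((s + c) * rexp s) :=
    mul_le_mul (exp_sub_exp_le_mul_exp s c) (by simpa using exp_sub_exp_le_mul_exp s (-c))
      (sub_nonneg.mpr (exp_le_exp.mpr (by linarith)))
      (mul_nonneg (by linarith) (exp_pos s).le)
  refine le_of_mul_le_mul_right ?_ (exp_pos s)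
  calc 2 * (cosh s - cosh c) * rexp s = (rexp s - rexp c) * (rexp s - rexp (-c)) := hfactor
    _ ≤ (s - c) * rexp s * ((s + c) * rexp s) := hprod
    _ = (s - c) * (s + c) * rexp s * rexp s := by ring

lemma exp_half_mul_cosh_sub_cosh_le {s c : ℝ} (hs : s ≤ 1) (hc : |c| ≤ s) :
    rexp (s / 2) * (2 * (cosh s - cosh c)) ≤ 16 * s * (s - c) := by
  obtain ⟨hcs, hsc⟩ := abs_le.mp hc
  have hexp : rexp (s / 2) * rexp s ≤ 8 := by
    rw [← exp_add]
    calc rexp (s / 2 + s) ≤ rexp 1 ^ 2 := by rw [← exp_nat_mul]; exact exp_le_exp.mpr (by linarith)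
      _ ≤ 8 := by nlinarith [exp_one_lt_d9, exp_pos 1]
  have hprod : 0 ≤ (s - c) * (s + c) := mul_nonneg (by linarith) (by linarith)
  calc rexp (s / 2) * (2 * (cosh s - cosh c))
      ≤ rexp (s / 2) * ((s - c) * (s + c) * rexp s) :=
        mul_le_mul_of_nonneg_left (two_mul_cosh_sub_cosh_le hc) (exp_pos _).le
    _ = (s - c) * (s + c) * (rexp (s / 2) * rexp s) := by ring
    _ ≤ (s - c) * (s + c) * 8 := mul_le_mul_of_nonneg_left hexp hprod
    _ ≤ 16 * s * (s - c) := by nlinarith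

end

/-- If `‖θ_0‖ = ‖θ_1‖ = t ≤ σ`, the chi-square divergence between the symmetric
Gaussian mixtures with means `±θ_1` and `±θ_0` satisfies
`χ²(P̃_{θ_1} ‖ P̃_{θ_0}) ≤ (8t²/σ⁴)·‖θ_0 - θ_1‖²`. -/
theorem stmt7 (d : ℕ) (σ t : ℝ) (hσ : 0 < σ)
    (θ0 θ1 : EuclideanSpace ℝ (Fin d))
    (h0 : ‖θ0‖ = t) (h1 : ‖θ1‖ = t) (ht : t ≤ σ) :
    ∫ y, (mixDen d σ θ1 y - mixDen d σ θ0 y) ^ 2 / mixDen d σ θ0 y ≤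
      8 * t ^ 2 / σ ^ 4 * ‖θ0 - θ1‖ ^ 2 := by
  have hσ2 : 0 < σ ^ 2 := by positivity
  have ht0 : 0 ≤ t := h0 ▸ norm_nonneg θ0
  have hs1 : t ^ 2 / σ ^ 2 ≤ 1 := (div_le_one hσ2).mpr (pow_le_pow_left₀ ht0 ht 2)
  have hcs : |⟪θ1, θ0⟫ / σ ^ 2| ≤ t ^ 2 / σ ^ 2 := by
    rw [abs_div, abs_of_pos hσ2, sq t]
    gcongr
    simpa [h0, h1] using abs_real_inner_le_norm θ1 θ0
  have hdist : 8 * t ^ 2 / σ ^ 4 * ‖θ0 - θ1‖ ^ 2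
      = 16 * (t ^ 2 / σ ^ 2) * (t ^ 2 / σ ^ 2 - ⟪θ1, θ0⟫ / σ ^ 2) := by
    rw [norm_sub_sq_real, h0, h1, real_inner_comm]
    field_simp
    ring
  have hchi := chiSq_mixDen_le hσ.ne' θ1 θ0
  rw [h0, h1] at hchi
  calc ∫ y, (mixDen d σ θ1 y - mixDen d σ θ0 y) ^ 2 / mixDen d σ θ0 y
      ≤ rexp (t ^ 2 / (2 * σ ^ 2))
        * (cosh (t ^ 2 / σ ^ 2) - 2 * cosh (⟪θ1, θ0⟫ / σ ^ 2) + cosh (t ^ 2 / σ ^ 2)) := hchi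
    _ = rexp (t ^ 2 / σ ^ 2 / 2) * (2 * (cosh (t ^ 2 / σ ^ 2) - cosh (⟪θ1, θ0⟫ / σ ^ 2))) := by
        ring_nf
    _ ≤ 16 * (t ^ 2 / σ ^ 2) * (t ^ 2 / σ ^ 2 - ⟪θ1, θ0⟫ / σ ^ 2) :=
        exp_half_mul_cosh_sub_cosh_le hs1 hcs
    _ = 8 * t ^ 2 / σ ^ 4 * ‖θ0 - θ1‖ ^ 2 := hdist.symm
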